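/- The sequence u_2(n) := Σ_{k≥0} a(n,k)^2 satisfies the linear recurrence u_2(n) = 5 u_2(n-1) - 2 u_2(n-2) for all n ≥ 2, with u_2(0) = 1 and u_2(1) = 3. -/

import Mathlib

open Polynomial

noncomputable def F (n : ℕ) : Polynomial ℤ :=
  ∏ i ∈ Finset.range n, (1 + X ^ (2 ^ i) + X ^ (2 ^ (i + 1)))

noncomputable def a (n : ℕ) (k : ℕ) : ℤ := (F n).coeff k

noncomputable def u2 (n : ℕ) : ℤ := ∑ᶠ k : ℕ, (a n k) ^ 2

/-!
Each factor `1 + y + y²` is palindromic, hence so is `F n`, of degree `N = 2 * (2 ^ n - 1)`;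
therefore `∑ a(n,k)² = ∑ a(n,k) a(n,N-k)` is the central coefficient of `F n ^ 2`. Since
`F (n+1) ^ 2 = F n ^ 2 * (1 + y + y²)² = F n ^ 2 * (1 + 2y + 3y² + 2y³ + y⁴)` with `y = X ^ 2 ^ n`,
and `F n ^ 2` is palindromic of degree `2N < N + 2 * 2 ^ n`, the central coefficient `u` and the
coefficient `w` at `2 ^ n` above the centre evolve by `u' = 3u + 4w`, `w' = u + 2w`.
Eliminating `w` gives the recurrence.
-/

section Palindromic

variable {R : Type*} [CommSemiring R]

theorem natDegree_one_add_X_pow_add_X_pow_le (m : ℕ) :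
    ((1 : R[X]) + X ^ m + X ^ (2 * m)).natDegree ≤ 2 * m := by
  refine natDegree_add_le_of_degree_le (natDegree_add_le_of_degree_le ?_ ?_) ?_
  · simp
  · exact (natDegree_X_pow_le m).trans (by omega)
  · exact natDegree_X_pow_le _

theorem reflect_one_add_X_pow_add_X_pow (m : ℕ) :
    reflect (2 * m) ((1 : R[X]) + X ^ m + X ^ (2 * m)) = 1 + X ^ m + X ^ (2 * m) := by
  rw [reflect_add, reflect_add, reflect_one, reflect_monomial, reflect_monomial,
    revAt_le (by omega), revAt_le le_rfl, Nat.sub_self, show 2 * m - m = m by omega, pow_zero]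
  ring

theorem coeff_sub_eq_of_reflect_eq {p : R[X]} {N : ℕ} (hp : reflect N p = p) {k : ℕ}
    (hk : k ≤ N) : p.coeff (N - k) = p.coeff k := by
  rw [← revAt_le hk, ← coeff_reflect, hp]

theorem sum_coeff_sq_eq_coeff_sq {p : R[X]} {N : ℕ} (hp : reflect N p = p) :
    ∑ k ∈ Finset.range (N + 1), p.coeff k ^ 2 = (p ^ 2).coeff N := by
  rw [sq p, coeff_mul,
    Finset.Nat.sum_antidiagonal_eq_sum_range_succ (fun i j => p.coeff i * p.coeff j)]
  refine Finset.sum_congr rfl fun k hk => ?_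
  rw [coeff_sub_eq_of_reflect_eq hp (Finset.mem_range_succ_iff.mp hk), sq]

theorem finsum_coeff_sq_eq_coeff_sq {p : R[X]} {N : ℕ} (hdeg : p.natDegree ≤ N)
    (hp : reflect N p = p) : ∑ᶠ k, p.coeff k ^ 2 = (p ^ 2).coeff N := by
  rw [finsum_eq_sum_of_support_subset _ (s := Finset.range (N + 1)) ?_,
    sum_coeff_sq_eq_coeff_sq hp]
  refine Function.support_subset_iff'.mpr fun k hk => ?_
  simp only [Finset.coe_range, Set.mem_Iio, not_lt] at hk
  simp [coeff_eq_zero_of_natDegree_lt (show p.natDegree < k by omega)]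

theorem coeff_add_eq_of_reflect_eq {p : R[X]} {N : ℕ} (hdeg : p.natDegree ≤ 2 * N)
    (hp : reflect (2 * N) p = p) (j : ℕ) :
    p.coeff (N + j) = if j ≤ N then p.coeff (N - j) else 0 := by
  split_ifs with hj
  · rw [← coeff_sub_eq_of_reflect_eq hp (show N + j ≤ 2 * N by omega)]
    congr 1
    omega
  · exact coeff_eq_zero_of_natDegree_lt (by omega)

theorem coeff_mul_one_add_X_pow_add_X_pow_sq (p : R[X]) (s d : ℕ) :
    (p * (1 + X ^ s + X ^ (2 * s)) ^ 2).coeff d =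
      p.coeff d + 2 * (if s ≤ d then p.coeff (d - s) else 0)
        + 3 * (if 2 * s ≤ d then p.coeff (d - 2 * s) else 0)
        + 2 * (if 3 * s ≤ d then p.coeff (d - 3 * s) else 0)
        + (if 4 * s ≤ d then p.coeff (d - 4 * s) else 0) := by
  have : (1 + X ^ s + X ^ (2 * s) : R[X]) ^ 2 =
      1 + 2 * X ^ s + 3 * X ^ (2 * s) + 2 * X ^ (3 * s) + X ^ (4 * s) := by ring
  simp only [this, mul_add, coeff_add, mul_one, mul_left_comm p, coeff_ofNat_mul, coeff_mul_X_pow']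

theorem coeff_mul_one_add_X_pow_add_X_pow_sq_of_centre {p : R[X]} {N s : ℕ}
    (hdeg : p.natDegree ≤ 2 * N) (hp : reflect (2 * N) p = p) (hN : N < 2 * s) :
    (p * (1 + X ^ s + X ^ (2 * s)) ^ 2).coeff (N + 2 * s) =
      3 * p.coeff N + 4 * p.coeff (N + s) := by
  have hlow :
      (if 3 * s ≤ N + 2 * s then p.coeff (N + 2 * s - 3 * s) else 0) = p.coeff (N + s) := by
    rw [coeff_add_eq_of_reflect_eq hdeg hp]
    simp only [show 3 * s ≤ N + 2 * s ↔ s ≤ N by omega, show N + 2 * s - 3 * s = N - s by omega]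
  rw [coeff_mul_one_add_X_pow_add_X_pow_sq, hlow, if_pos (by omega), if_pos (by omega),
    if_neg (by omega), coeff_eq_zero_of_natDegree_lt (by omega : p.natDegree < N + 2 * s),
    show N + 2 * s - s = N + s by omega, Nat.add_sub_cancel]
  ring

theorem coeff_mul_one_add_X_pow_add_X_pow_sq_of_offCentre {p : R[X]} {N s : ℕ}
    (hdeg : p.natDegree ≤ 2 * N) (hN : N < 2 * s) :
    (p * (1 + X ^ s + X ^ (2 * s)) ^ 2).coeff (N + 2 * s + 2 * s) =
      p.coeff N + 2 * p.coeff (N + s) := by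
  rw [coeff_mul_one_add_X_pow_add_X_pow_sq, if_pos (by omega), if_pos (by omega),
    if_pos (by omega), if_pos (by omega), show N + 2 * s + 2 * s - s = N + 3 * s by omega,
    show N + 2 * s + 2 * s - 2 * s = N + 2 * s by omega,
    show N + 2 * s + 2 * s - 3 * s = N + s by omega,
    show N + 2 * s + 2 * s - 4 * s = N by omega]
  have hzero : ∀ j, N < j → p.coeff (N + j) = 0 := fun j hj =>
    coeff_eq_zero_of_natDegree_lt (by omega)
  rw [add_assoc N (2 * s), hzero _ (by omega), hzero _ (by omega), hzero _ (by omega)]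
  ring

end Palindromic

theorem F_succ (n : ℕ) : F (n + 1) = F n * (1 + X ^ 2 ^ n + X ^ (2 * 2 ^ n)) := by
  rw [F, F, Finset.prod_range_succ, pow_succ' 2 n]

theorem two_mul_two_pow_succ_sub_one (n : ℕ) :
    2 * (2 ^ (n + 1) - 1) = 2 * (2 ^ n - 1) + 2 * 2 ^ n := by
  have := Nat.one_le_two_pow (n := n)
  rw [pow_succ]
  omega

theorem natDegree_F_le (n : ℕ) : (F n).natDegree ≤ 2 * (2 ^ n - 1) := by
  induction n with
  | zero => simp [F]
  | succ n ih =>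
    rw [F_succ, two_mul_two_pow_succ_sub_one]
    exact natDegree_mul_le_of_le ih (natDegree_one_add_X_pow_add_X_pow_le _)

theorem reflect_F (n : ℕ) : reflect (2 * (2 ^ n - 1)) (F n) = F n := by
  induction n with
  | zero => simp [F]
  | succ n ih =>
    rw [F_succ, two_mul_two_pow_succ_sub_one,
      reflect_mul _ _ (natDegree_F_le n) (natDegree_one_add_X_pow_add_X_pow_le _), ih,
      reflect_one_add_X_pow_add_X_pow]

theorem natDegree_F_sq_le (n : ℕ) : (F n ^ 2).natDegree ≤ 2 * (2 * (2 ^ n - 1)) :=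
  natDegree_pow_le_of_le 2 (natDegree_F_le n)

theorem reflect_F_sq (n : ℕ) : reflect (2 * (2 * (2 ^ n - 1))) (F n ^ 2) = F n ^ 2 := by
  rw [sq, two_mul (2 * _), reflect_mul _ _ (natDegree_F_le n) (natDegree_F_le n), reflect_F]

theorem u2_eq_coeff_F_sq (n : ℕ) : u2 n = (F n ^ 2).coeff (2 * (2 ^ n - 1)) :=
  finsum_coeff_sq_eq_coeff_sq (natDegree_F_le n) (reflect_F n)

/-- By palindromy this is `∑ k, a n k * a n (k + 2 ^ n)`. -/
noncomputable def w2 (n : ℕ) : ℤ := (F n ^ 2).coeff (2 * (2 ^ n - 1) + 2 ^ n)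

theorem u2_succ (n : ℕ) : u2 (n + 1) = 3 * u2 n + 4 * w2 n := by
  rw [u2_eq_coeff_F_sq, u2_eq_coeff_F_sq, w2, F_succ, mul_pow, two_mul_two_pow_succ_sub_one]
  exact coeff_mul_one_add_X_pow_add_X_pow_sq_of_centre (natDegree_F_sq_le n) (reflect_F_sq n)
    (by have := Nat.one_le_two_pow (n := n); omega)

theorem w2_succ (n : ℕ) : w2 (n + 1) = u2 n + 2 * w2 n := by
  rw [w2, w2, u2_eq_coeff_F_sq, F_succ, mul_pow, two_mul_two_pow_succ_sub_one, pow_succ' 2 n]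
  exact coeff_mul_one_add_X_pow_add_X_pow_sq_of_offCentre (natDegree_F_sq_le n)
    (by have := Nat.one_le_two_pow (n := n); omega)

theorem u2_recurrence :
    u2 0 = 1 ∧ u2 1 = 3 ∧ ∀ n : ℕ, 2 ≤ n → u2 n = 5 * u2 (n - 1) - 2 * u2 (n - 2) := by
  have hu0 : u2 0 = 1 := by simp [u2_eq_coeff_F_sq, F]
  have hw0 : w2 0 = 0 := by simp [w2, F, coeff_one]
  refine ⟨hu0, by rw [u2_succ, hu0, hw0]; norm_num, fun n hn => ?_⟩
  obtain ⟨m, rfl⟩ := Nat.exists_eq_add_of_le' hn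
  rw [Nat.add_sub_cancel, show m + 2 - 1 = m + 1 by omega, u2_succ (m + 1), w2_succ, u2_succ m]
  ring
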